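/- arXiv:0908.0835 — 6 statements merged into one kernel-verified Lean document; each statement's English description precedes it below -/
import Mathlib

section
/- Let A = ({0,1}, f_c, f_d) be the self-similar cellular automaton where both f_c and f_d are the left shift, i.e., f_c(x,y,z) = f_d(x,y,z) = z. Then for any initial configuration c(0) and any s ∈ {0,1}, there exists an evolution of A consistent with the local rule and the initial configuration such that c_0(1) = s. In particular the evolution of A is indeterministic. -/
/-- An evolution of a self-similar cellular automaton `(S, fc, fd)` started at time 0:
`c j k` is the state of cell `j ∈ ℤ` during its cycle `(k+𝟙)/2^j`, `k ∈ ℕ`.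
Cycle `k ≥ 1` of cell `j` is coupled iff `k` is even, and the state is obtained by
applying `fc` (resp. `fd`) to the states of the last cycles
`T↙ = (⌊(k-1)/2⌋+𝟙)/2^(j-1)`, `T↓ = (k-1+𝟙)/2^j`, `T↘ = (2k-1+𝟙)/2^(j+1)`;
cycle 0 carries the initial configuration. -/
def Evolution {S : Type*} (fc fd : S → S → S → S) (init : ℤ → S) (c : ℤ → ℕ → S) : Prop :=
  (∀ j, c j 0 = init j) ∧
  ∀ (j : ℤ) (k : ℕ), 0 < k →
    c j k = (if Even k then fc else fd)
      (c (j - 1) ((k - 1) / 2)) (c j (k - 1)) (c (j + 1) (2 * k - 1))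

/-- For the self-similar cellular automaton over `{0,1}` whose coupled and decoupled
rules are both the left shift `(x,y,z) ↦ z`, every initial configuration admits, for
each state `s`, an evolution with `c 0 1 = s` (the state of cell 0 at time 1);
in particular the evolution is indeterministic. -/
theorem ssca_left_shift_indeterministic (init : ℤ → Bool) :
    (∀ s : Bool, ∃ c : ℤ → ℕ → Bool,
      Evolution (fun _ _ z => z) (fun _ _ z => z) init c ∧ c 0 1 = s) ∧
    ∃ c₁ c₂ : ℤ → ℕ → Bool,
      Evolution (fun _ _ z => z) (fun _ _ z => z) init c₁ ∧
      Evolution (fun _ _ z => z) (fun _ _ z => z) init c₂ ∧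
      c₁ 0 1 ≠ c₂ 0 1 := by
  have key : ∀ s : Bool, ∃ c : ℤ → ℕ → Bool,
      Evolution (fun _ _ z => z) (fun _ _ z => z) init c ∧ c 0 1 = s := by
    intro s
    refine ⟨fun j k => if k = 0 then init j else s, ⟨fun j => rfl, ?_⟩, rfl⟩
    intro j k hk
    have h1 : k ≠ 0 := hk.ne'
    have h2 : 2 * k - 1 ≠ 0 := by omega
    rcases Nat.even_or_odd k with h | h <;>
      simp [h, Nat.not_even_iff_odd.mpr, h1, h2, Nat.odd_iff.mp]
  obtain ⟨c₁, hc₁, h₁⟩ := key true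
  obtain ⟨c₂, hc₂, h₂⟩ := key false
  exact ⟨key, c₁, c₂, hc₁, hc₂, by simp [h₁, h₂]⟩
end

section
/- Let A = (S, f_c, f_d) with q ∈ S satisfying f_c(x,q,y) = f_d(x,q,y) = q for all x,y. If in the initial configuration at time 0 cell j is in state q, then for every cell i ≤ j, the state of cell i at any time t ≥ 0 is the same in all evolutions of A with that initial configuration (i.e., cells to the left of a permanently quiescent cell evolve deterministically). -/
namespace Evolution

variable {S : Type*} {fc fd : S → S → S → S} {init : ℤ → S}

theorem apply_eq_of_init_eq_absorbing {c : ℤ → ℕ → S} (hc : Evolution fc fd init c) {q : S}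
    (hq : ∀ x y : S, fc x q y = q ∧ fd x q y = q) {j : ℤ} (hj : init j = q) (k : ℕ) :
    c j k = q := by
  induction k with
  | zero => rw [hc.1, hj]
  | succ k ih =>
    rw [hc.2 j (k + 1) k.succ_pos, Nat.add_sub_cancel, ih]
    split_ifs
    · exact (hq _ _).1
    · exact (hq _ _).2

theorem apply_eq_apply_of_le_of_column_eq {c₁ c₂ : ℤ → ℕ → S} (h₁ : Evolution fc fd init c₁)
    (h₂ : Evolution fc fd init c₂) {j : ℤ} (hj : ∀ k, c₁ j k = c₂ j k) {i : ℤ} (hi : i ≤ j)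
    (k : ℕ) : c₁ i k = c₂ i k := by
  obtain ⟨d, hd⟩ : ∃ d : ℕ, i + d = j := ⟨(j - i).toNat, by omega⟩
  clear hi
  induction hn : k * 2 ^ d using Nat.strong_induction_on generalizing i d k with
  | _ n ih =>
  rcases Nat.eq_zero_or_pos k with rfl | hk
  · rw [h₁.1, h₂.1]
  rcases d with _ | d
  · obtain rfl : i = j := by simpa using hd
    exact hj k
  have left : c₁ (i - 1) ((k - 1) / 2) = c₂ (i - 1) ((k - 1) / 2) := by
    refine ih _ ?_ (i := i - 1) (k := (k - 1) / 2) (d := d + 2) (by omega) rfl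
    calc (k - 1) / 2 * 2 ^ (d + 2) = 2 * ((k - 1) / 2) * 2 ^ (d + 1) := by ring
      _ < k * 2 ^ (d + 1) := by gcongr; omega
      _ = n := hn
  have below : c₁ i (k - 1) = c₂ i (k - 1) := by
    refine ih _ ?_ (k := k - 1) (d := d + 1) hd rfl
    rw [← hn]
    gcongr
    omega
  have right : c₁ (i + 1) (2 * k - 1) = c₂ (i + 1) (2 * k - 1) := by
    refine ih _ ?_ (i := i + 1) (k := 2 * k - 1) (d := d) (by omega) rfl
    calc (2 * k - 1) * 2 ^ d < 2 * k * 2 ^ d := by gcongr; omega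
      _ = n := by rw [← hn]; ring
  rw [h₁.2 i k hk, h₂.2 i k hk, left, below, right]

end Evolution

/-- If `q` satisfies `fc x q y = fd x q y = q` for all `x, y` and cell `j` is in
state `q` in the initial configuration, then every cell `i ≤ j` evolves
deterministically: its state at every time is the same in all evolutions with that
initial configuration. -/
theorem ssca_deterministic_left_of_quiescent {S : Type*} (fc fd : S → S → S → S) (q : S)
    (hq : ∀ x y : S, fc x q y = q ∧ fd x q y = q)
    (init : ℤ → S) (j : ℤ) (hj : init j = q) :
    ∀ c₁ c₂ : ℤ → ℕ → S, Evolution fc fd init c₁ → Evolution fc fd init c₂ →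
      ∀ i : ℤ, i ≤ j → ∀ k : ℕ, c₁ i k = c₂ i k := by
  intro c₁ c₂ h₁ h₂ i hi
  refine h₁.apply_eq_apply_of_le_of_column_eq h₂ (fun k => ?_) hi
  rw [h₁.apply_eq_of_init_eq_absorbing hq hj, h₂.apply_eq_of_init_eq_absorbing hq hj]
end

section
/- Define the causal relation ≺ on cycles C = {(i, (k+𝟙)/2^i) : i ∈ ℤ, k ∈ ℤ, k ≥ 0} by (i₁,T₁) ≺ (i₂,T₂) iff (i₁ = i₂-1 and T₁ = T₂↙) or (i₁ = i₂ and T₁ = T₂↓) or (i₁ = i₂+1 and T₁ = T₂↘). Then for every cycle (0,T) with T = [k, k+1), k ≥ 1, the past light cone P = {(i,T') ∈ C : (i,T') ≺* (0,T)}, where ≺* is the transitive closure, contains cycles (i,T') for arbitrarily large i; in particular P is infinite. -/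
/-!
Following only `↘`-steps already suffices: `(i + 1, 2m - 1) ≺ (i, m)` whenever `m ≥ 1`, and
`2m - 1 ≥ 1` again, so from `(0, k)` with `k ≥ 1` one can descend into every cell `n + 1`.
The first coordinates of the past light cone are therefore unbounded, hence the cone is infinite.
-/

/-- The causal relation `≺` on cycles `(i, (k+𝟙)/2^i)`, `i ∈ ℤ`, `k ∈ ℕ`
(represented as pairs `(i, k)`): `(i₁,T₁) ≺ (i₂,T₂)` iff `T₂` has cycle index
`k ≥ 1` and `T₁` is one of `T₂↙ = (⌊(k-1)/2⌋+𝟙)/2^(i₂-1)`,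
`T₂↓ = (k-1+𝟙)/2^i₂`, `T₂↘ = (2k-1+𝟙)/2^(i₂+1)`. -/
def cyclePrec (p r : ℤ × ℕ) : Prop :=
  1 ≤ r.2 ∧
    ((p.1 = r.1 - 1 ∧ p.2 = (r.2 - 1) / 2) ∨
     (p.1 = r.1 ∧ p.2 = r.2 - 1) ∨
     (p.1 = r.1 + 1 ∧ p.2 = 2 * r.2 - 1))

lemma cyclePrec_lowerRight (i : ℤ) {m : ℕ} (hm : 1 ≤ m) :
    cyclePrec (i + 1, 2 * m - 1) (i, m) :=
  ⟨hm, Or.inr (Or.inr ⟨rfl, rfl⟩)⟩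

lemma exists_transGen_cyclePrec_cell_add (i : ℤ) {m : ℕ} (hm : 1 ≤ m) (n : ℕ) :
    ∃ m', 1 ≤ m' ∧ Relation.TransGen cyclePrec (i + n + 1, m') (i, m) := by
  induction n with
  | zero => exact ⟨2 * m - 1, by omega, .single (by simpa using cyclePrec_lowerRight i hm)⟩
  | succ n ih =>
    obtain ⟨m', hm', hchain⟩ := ih
    refine ⟨2 * m' - 1, by omega, .head ?_ hchain⟩
    simpa [add_assoc] using cyclePrec_lowerRight (i + n + 1) hm'

lemma Set.infinite_of_forall_exists_fst_gt {α β : Type*} [Preorder α] [Nonempty α]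
    [NoMaxOrder α] {s : Set (α × β)} (h : ∀ a, ∃ p ∈ s, a < p.1) : s.Infinite :=
  Set.Infinite.of_image Prod.fst <| Set.infinite_of_forall_exists_gt fun a ↦
    let ⟨p, hp, hlt⟩ := h a
    ⟨p.1, Set.mem_image_of_mem _ hp, hlt⟩

/-- For every cycle `(0, T)` of cell 0 with `T = [k, k+1)`, `k ≥ 1`, the past light
cone `P = {(i,T') : (i,T') ≺* (0,T)}` contains cycles of cells with arbitrarily
large index; in particular `P` is infinite. -/
theorem ssca_past_light_cone_infinite (k : ℕ) (hk : 1 ≤ k) :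
    (∀ N : ℤ, ∃ p : ℤ × ℕ, Relation.TransGen cyclePrec p (0, k) ∧ N < p.1) ∧
    {p : ℤ × ℕ | Relation.TransGen cyclePrec p (0, k)}.Infinite := by
  have unbounded : ∀ N : ℤ, ∃ p : ℤ × ℕ, Relation.TransGen cyclePrec p (0, k) ∧ N < p.1 := by
    intro N
    obtain ⟨m, -, hchain⟩ := exists_transGen_cyclePrec_cell_add 0 hk N.toNat
    exact ⟨_, hchain, by have := Int.self_le_toNat N; dsimp only; omega⟩
  exact ⟨unbounded, Set.infinite_of_forall_exists_fst_gt unbounded⟩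
end

section
/- The state c_i(t₂) of cell i of a self-similar cellular automaton started at time t₁ < t₂ with configuration c(t₁) is deterministic (the same in all evolutions) if and only if there exists an index j such that c_i(t₂) depends only on the initial states c_l(t₁) with l < j (i.e., any two initial configurations agreeing on all cells with index < j and admitting evolutions yield the same value c_i(t₂) in every evolution). -/
/-- Determinism lemma: the state of cell `i` during its cycle `k ≥ 1`
(representing the time `t₂` after the start `t₁`) is deterministic — the same in
all evolutions from the initial configuration `init` — if and only if there is an
index `j` such that this state depends only on the initial states of the cells with
index `< j`: any initial configuration agreeing with `init` below `j` yields the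
same state in every evolution. -/
theorem ssca_determinism_iff {S : Type*} [Fintype S] [Nonempty S]
    (fc fd : S → S → S → S) (init : ℤ → S) (i : ℤ) (k : ℕ) (hk : 0 < k) :
    (∀ c₁ c₂ : ℤ → ℕ → S, Evolution fc fd init c₁ → Evolution fc fd init c₂ →
        c₁ i k = c₂ i k) ↔
      ∃ j : ℤ, ∀ (init' : ℤ → S) (c₁ c₂ : ℤ → ℕ → S),
        (∀ l : ℤ, l < j → init' l = init l) →
        Evolution fc fd init c₁ → Evolution fc fd init' c₂ →
        c₁ i k = c₂ i k := by
  constructor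
  · intro hdet
    by_contra hne
    push_neg at hne
    obtain ⟨init₀, c₁₀, c₂₀, _, hc₁₀, _, _⟩ := hne 0
    set v := c₁₀ i k with hv
    letI : TopologicalSpace S := ⊥
    haveI : DiscreteTopology S := ⟨rfl⟩
    set X := (ℤ → S) × (ℤ → ℕ → S) with hX
    have hcont2 : ∀ (j : ℤ) (m : ℕ), Continuous (fun x : X => x.2 j m) :=
      fun j m => (continuous_apply m).comp ((continuous_apply j).comp continuous_snd)
    have hcont1 : ∀ j : ℤ, Continuous (fun x : X => x.1 j) :=
      fun j => (continuous_apply j).comp continuous_fst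
    -- closedness of the evolution set
    have hEvoEq : {x : X | Evolution fc fd x.1 x.2} =
        (⋂ j : ℤ, {x : X | x.2 j 0 = x.1 j}) ∩
        ⋂ (j : ℤ), ⋂ (m : ℕ), {x : X | x.2 j (m + 1) = (if Even (m + 1) then fc else fd)
          (x.2 (j - 1) ((m + 1 - 1) / 2)) (x.2 j (m + 1 - 1)) (x.2 (j + 1) (2 * (m + 1) - 1))} := by
      ext x
      simp only [Set.mem_setOf_eq, Set.mem_inter_iff, Set.mem_iInter]
      constructor
      · rintro ⟨h0, hr⟩
        exact ⟨h0, fun j m => hr j (m + 1) (Nat.succ_pos m)⟩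
      · rintro ⟨h0, hr⟩
        refine ⟨h0, fun j K hK => ?_⟩
        obtain ⟨m, rfl⟩ := Nat.exists_eq_add_of_lt hK
        simpa using hr j m
    have hEvoClosed : IsClosed {x : X | Evolution fc fd x.1 x.2} := by
      rw [hEvoEq]
      refine IsClosed.inter (isClosed_iInter fun j => isClosed_eq (hcont2 j 0) (hcont1 j))
        (isClosed_iInter fun j => isClosed_iInter fun m => isClosed_eq (hcont2 j (m + 1)) ?_)
      have hF : Continuous (fun p : S × S × S =>
          (if Even (m + 1) then fc else fd) p.1 p.2.1 p.2.2) := continuous_of_discreteTopology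
      exact hF.comp (((hcont2 (j - 1) ((m + 1 - 1) / 2))).prodMk
        ((hcont2 j (m + 1 - 1)).prodMk (hcont2 (j + 1) (2 * (m + 1) - 1))))
    have hNeClosed : IsClosed {x : X | x.2 i k ≠ v} := by
      have : {x : X | x.2 i k ≠ v} = ((fun x : X => x.2 i k) ⁻¹' {v})ᶜ := rfl
      rw [this]
      exact (IsOpen.preimage (hcont2 i k) (isOpen_discrete _)).isClosed_compl
    -- the directed family
    set K : ℤ → Set X := fun j =>
      ({x : X | Evolution fc fd x.1 x.2} ∩ {x : X | x.2 i k ≠ v}) ∩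
        {x : X | ∀ l < j, x.1 l = init l} with hKdef
    have hKclosed : ∀ j, IsClosed (K j) := by
      intro j
      refine IsClosed.inter (hEvoClosed.inter hNeClosed) ?_
      have : {x : X | ∀ l < j, x.1 l = init l} =
          ⋂ (l : ℤ), ⋂ (_ : l < j), {x : X | x.1 l = init l} := by
        ext x; simp [Set.mem_iInter]
      rw [this]
      exact isClosed_iInter fun l => isClosed_iInter fun _ =>
        isClosed_eq (hcont1 l) continuous_const
    have hKdir : Directed (· ⊇ ·) K := by
      intro j₁ j₂
      refine ⟨max j₁ j₂, ?_, ?_⟩ <;>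
        exact fun x hx => ⟨hx.1, fun l hl => hx.2 l (lt_of_lt_of_le hl (by simp))⟩
    have hKne : ∀ j, (K j).Nonempty := by
      intro j
      obtain ⟨init', c₁, c₂, hagree, hc₁, hc₂, hneq⟩ := hne j
      refine ⟨(init', c₂), ⟨hc₂, ?_⟩, hagree⟩
      have : c₁ i k = v := hdet c₁ c₁₀ hc₁ hc₁₀
      rw [← this]; exact fun h => hneq h.symm
    obtain ⟨x, hx⟩ := IsCompact.nonempty_iInter_of_directed_nonempty_isCompact_isClosed
      K hKdir hKne (fun j => (hKclosed j).isCompact) hKclosed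
    have hxj : ∀ j, x ∈ K j := Set.mem_iInter.mp hx
    have hinit : x.1 = init := funext fun l => (hxj (l + 1)).2 l (lt_add_one l)
    have hEvo : Evolution fc fd init x.2 := hinit ▸ (hxj 0).1.1
    exact (hxj 0).1.2 (hdet x.2 c₁₀ hEvo hc₁₀)
  · rintro ⟨j, hj⟩ c₁ c₂ h₁ h₂
    exact hj init c₁ c₂ (fun l _ => rfl) h₁ h₂
end

section
/- There is no self-similar cellular automaton with states containing {0,1}, no time t > 0, and no local rule such that, when started at time 0 with a configuration from the set C = {0^∞} ∪ {configurations with exactly one cell in state 1, at some positive index, all other cells 0}, the (deterministic) state of cell 0 at time t equals 1 if and only if the initial configuration contains a 1. -/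
/-!
Evolutions need not be unique, since cell `j` looks at the faster cell `j + 1`; both the
existence of evolutions and the contradiction come from compactness of `ℤ → ℕ → S` for
finite `S`. Let `e N` be an evolution of the configuration with a single `1` at `N + 1`, so
that cell 0 is `1` in cycle `k`. A limit of the `e N` along a free ultrafilter still satisfies
the local rule, and its initial configuration is `0^∞`, because every cell is eventually
left of `N + 1`. So it is an evolution of `0^∞` in which cell 0 is `1` in cycle `k`.
-/

open Filter

namespace Evolution

variable {S : Type*} (fc fd : S → S → S → S) (init : ℤ → S)

/-- Cells to the right of `N` are frozen at `v` after cycle 0; the recursion terminates since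
cycle `m + 1` of cell `j` ends at time `(m + 2) / 2 ^ j`, after the three cycles it reads. -/
def truncated (v : S) (N : ℤ) (j : ℤ) : ℕ → S
  | 0 => init j
  | m + 1 =>
    if h : N < j then v
    else (if Even (m + 1) then fc else fd)
      (truncated v N (j - 1) (m / 2)) (truncated v N j m) (truncated v N (j + 1) (2 * m + 1))
termination_by m => m * 2 ^ (N + 1 - j).toNat
decreasing_by
  all_goals have hp : 0 < 2 ^ (N + 1 - j).toNat := by positivity
  · rw [show (N + 1 - (j - 1)).toNat = (N + 1 - j).toNat + 1 by omega, pow_succ]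
    nlinarith [Nat.div_mul_le_self m 2]
  · exact Nat.mul_lt_mul_of_pos_right (Nat.lt_succ_self m) hp
  · rw [show (N + 1 - j).toNat = (N + 1 - (j + 1)).toNat + 1 by omega, pow_succ] at hp ⊢
    nlinarith

variable {fc fd init}

theorem truncated_zero (v : S) (N j : ℤ) : truncated fc fd init v N j 0 = init j := by
  rw [truncated]

theorem truncated_step (v : S) {N j : ℤ} (hj : j ≤ N) {m : ℕ} (hm : 0 < m) :
    truncated fc fd init v N j m = (if Even m then fc else fd)
      (truncated fc fd init v N (j - 1) ((m - 1) / 2)) (truncated fc fd init v N j (m - 1))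
      (truncated fc fd init v N (j + 1) (2 * m - 1)) := by
  obtain ⟨m, rfl⟩ := Nat.exists_eq_add_one_of_ne_zero hm.ne'
  rw [truncated, dif_neg (not_lt.mpr hj)]
  simp only [Nat.add_sub_cancel, show 2 * (m + 1) - 1 = 2 * m + 1 by omega]

theorem of_eventually {ι : Type*} {L : Filter ι} [L.NeBot] {e : ι → ℤ → ℕ → S}
    {c : ℤ → ℕ → S} (hlim : ∀ j m, ∀ᶠ i in L, e i j m = c j m)
    (hinit : ∀ j, ∀ᶠ i in L, e i j 0 = init j)
    (hstep : ∀ j m, 0 < m → ∀ᶠ i in L, e i j m = (if Even m then fc else fd)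
      (e i (j - 1) ((m - 1) / 2)) (e i j (m - 1)) (e i (j + 1) (2 * m - 1))) :
    Evolution fc fd init c := by
  refine ⟨fun j => ?_, fun j m hm => ?_⟩
  · obtain ⟨i, hc, he⟩ := ((hlim j 0).and (hinit j)).exists
    rw [← hc, he]
  · obtain ⟨i, hc, hc₁, hc₂, hc₃, he⟩ := ((hlim j m).and <| (hlim (j - 1) ((m - 1) / 2)).and <|
      (hlim j (m - 1)).and <| (hlim (j + 1) (2 * m - 1)).and (hstep j m hm)).exists
    rw [← hc, ← hc₁, ← hc₂, ← hc₃, he]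

end Evolution

theorem Ultrafilter.exists_forall_eventually_eq {ι α S : Type*} [Finite S] (U : Ultrafilter ι)
    (f : ι → α → S) : ∃ g : α → S, ∀ a, ∀ᶠ i in U, f i a = g a := by
  choose g hg using fun a => (U.map (f · a)).eq_pure_of_finite
  refine ⟨g, fun a => Ultrafilter.mem_map.mp (?_ : {g a} ∈ U.map (f · a))⟩
  rw [hg a]
  exact Ultrafilter.mem_pure.mpr rfl

theorem Nat.eventually_intCast_ge_hyperfilter (j : ℤ) : ∀ᶠ N : ℕ in hyperfilter ℕ, j ≤ N := by
  refine hyperfilter_le_cofinite ?_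
  rw [Nat.cofinite_eq_atTop]
  filter_upwards [eventually_ge_atTop j.toNat] with N hN
  omega

theorem exists_evolution {S : Type*} [Finite S] (fc fd : S → S → S → S) (init : ℤ → S) :
    ∃ c, Evolution fc fd init c := by
  obtain ⟨c, hc⟩ := (hyperfilter ℕ).exists_forall_eventually_eq
    fun (N : ℕ) (x : ℤ × ℕ) => Evolution.truncated fc fd init (init 0) N x.1 x.2
  refine ⟨fun j m => c (j, m), Evolution.of_eventually (fun j m => hc (j, m))
    (fun j => .of_forall fun N => Evolution.truncated_zero ..) fun j m hm => ?_⟩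
  filter_upwards [Nat.eventually_intCast_ge_hyperfilter j] with N hN
  exact Evolution.truncated_step _ hN hm

theorem ssca_no_detector_general {S : Type*} [Fintype S]
    (fc fd : S → S → S → S) (z o : S) (k : ℕ) :
    ¬ ((∀ c : ℤ → ℕ → S, Evolution fc fd (fun _ => z) c → c 0 k ≠ o) ∧
       (∀ p : ℤ, 0 < p →
          ∀ c : ℤ → ℕ → S,
            Evolution fc fd (fun l => if l = p then o else z) c → c 0 k = o)) := by
  rintro ⟨hzero, hone⟩
  choose e he using fun N : ℕ => exists_evolution fc fd fun l => if l = (N : ℤ) + 1 then o else z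
  obtain ⟨c, hc⟩ := (hyperfilter ℕ).exists_forall_eventually_eq
    fun (N : ℕ) (x : ℤ × ℕ) => e N x.1 x.2
  have hc_evol : Evolution fc fd (fun _ => z) fun j m => c (j, m) := by
    refine Evolution.of_eventually (fun j m => hc (j, m)) (fun j => ?_)
      fun j m hm => .of_forall fun N => (he N).2 j m hm
    filter_upwards [Nat.eventually_intCast_ge_hyperfilter j] with N hN
    exact ((he N).1 j).trans (if_neg (by omega))
  obtain ⟨N, hN⟩ := (hc (0, k)).exists
  exact hzero _ hc_evol (hN ▸ hone _ (by positivity) _ (he N))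

/-- There is no self-similar cellular automaton (with distinct states `z = 0` and
`o = 1`), no cycle index `k ≥ 1` of cell 0 (representing a time `t > 0`), and no
local rule, such that when started at time 0 with a configuration from
`C = {0^∞} ∪ {single 1 at a positive index}`, the state of cell 0 at time `t` is
`1` if and only if the initial configuration contains a `1`. -/
theorem ssca_no_detector {S : Type*} [Fintype S] [Nonempty S]
    (fc fd : S → S → S → S) (z o : S) (hzo : z ≠ o) (k : ℕ) (hk : 0 < k) :
    ¬ ((∀ c : ℤ → ℕ → S, Evolution fc fd (fun _ => z) c → c 0 k ≠ o) ∧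
       (∀ p : ℤ, 0 < p →
          ∀ c : ℤ → ℕ → S,
            Evolution fc fd (fun l => if l = p then o else z) c → c 0 k = o)) :=
  ssca_no_detector_general fc fd z o k
end

section
/- Let A be the self-similar cellular automaton over S = ({0,1} × {<,>}) ∪ {□} with the billiard-ball block transformations (q_> □ ↦ q_< □, □ q_< ↦ □ q_>, for q ∈ {0,1}; and a_> b_< ↦ b_< a_> for a,b ∈ {0,1}), a cell keeping its state when no transformation applies. Started from a configuration of the form ...□□ (q₁)_> (q₂)_< (q₃)_> (q₄)_< ... (q_{n-1})_> (q_n)_< □□..., at every time each cell's state is uniquely determined; i.e., the evolution of A from such configurations is deterministic. -/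
/-- The state set `S = ({0,1} × {<,>}) ∪ {□}` of the billiard-ball automaton:
`some (q, true)` is `q_>`, `some (q, false)` is `q_<`, and `none` is `□`. -/
abbrev BBState := Option (Bool × Bool)

/-- The billiard-ball block transformations: `q_> □ ↦ q_< □`, `□ q_< ↦ □ q_>`, and
`a_> b_< ↦ b_< a_>` (i.e. `0_>0_< ↦ 0_<0_>`, `1_>0_< ↦ 0_<1_>`, `0_>1_< ↦ 1_<0_>`,
`1_>1_< ↦ 1_<1_>`); `none` means no transformation applies to the pair. -/
def bbBlock : BBState → BBState → Option (BBState × BBState)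
  | some (q, true), none => some (some (q, false), none)
  | none, some (q, false) => some (none, some (q, true))
  | some (a, true), some (b, false) => some (some (b, false), some (a, true))
  | _, _ => none

/-- The coupled local rule induced by the block transformations: a block
transformation `z₁ z₂ ↦ z₁' z₂'` specifies `f_c(x,z₁,z₂) = z₁'` and
`f_c(z₁,z₂,y) = z₂'`; otherwise the cell keeps its state. -/
def bbFc (x y z : BBState) : BBState :=
  match bbBlock y z with
  | some (y', _) => y'
  | none =>
    match bbBlock x y with
    | some (_, y') => y'
    | none => y

/-- The decoupled local rule: a block transformation `z₁ z₂ ↦ z₁' z₂'` specifies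
`f_d(x,z₁,z₂) = z₁'`; otherwise the cell keeps its state. -/
def bbFd (_x y z : BBState) : BBState :=
  match bbBlock y z with
  | some (y', _) => y'
  | none => y


/-- A cell in state `□` keeps state `□`, whatever its neighbors are. -/
lemma bbF_none : ∀ x z : BBState, bbFc x none z = none ∧ bbFd x none z = none := by decide

/-- A cell that is initially `□` stays `□` forever. -/
lemma bb_none_persists {init : ℤ → BBState} {c : ℤ → ℕ → BBState}
    (h : Evolution bbFc bbFd init c) {j : ℤ} (hj : init j = none) :
    ∀ k, c j k = none := by
  intro k
  induction k with
  | zero => rw [h.1]; exact hj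
  | succ n ihn =>
    rw [h.2 j (n + 1) n.succ_pos]
    have hsub : n + 1 - 1 = n := rfl
    rw [hsub, ihn]
    split
    · exact (bbF_none _ _).1
    · exact (bbF_none _ _).2

/-- Started from a configuration
`…□□ (q₁)_> (q₂)_< (q₃)_> (q₄)_< … (q_{2m-1})_> (q_{2m})_< □□…`
(cells `a, …, a + 2m - 1`), the billiard-ball self-similar cellular automaton is
deterministic: any two evolutions from such an initial configuration coincide. -/
theorem ssca_billiard_deterministic (a : ℤ) (m : ℕ) (hm : 1 ≤ m) (q : ℕ → Bool)
    (init : ℤ → BBState)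
    (hinit : ∀ l : ℤ, init l =
      if a ≤ l ∧ l < a + 2 * m then
        some (q (l - a).toNat, decide ((l - a) % 2 = 0))
      else none) :
    ∀ c₁ c₂ : ℤ → ℕ → BBState,
      Evolution bbFc bbFd init c₁ → Evolution bbFc bbFd init c₂ → c₁ = c₂ := by
  intro c₁ c₂ h₁ h₂
  have hout : ∀ l : ℤ, ¬(a ≤ l ∧ l < a + 2 * m) → ∀ k, c₁ l k = none ∧ c₂ l k = none := by
    intro l hl
    have hi : init l = none := by rw [hinit l, if_neg hl]
    exact fun k => ⟨bb_none_persists h₁ hi k, bb_none_persists h₂ hi k⟩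
  suffices H : ∀ n (j : ℤ) (k : ℕ), k * 2 ^ (a + 2 * m - 1 - j).toNat = n →
      c₁ j k = c₂ j k by
    funext j k; exact H _ j k rfl
  intro n
  induction n using Nat.strong_induction_on with
  | _ n ih =>
    intro j k hn
    rcases Nat.eq_zero_or_pos k with rfl | hk
    · rw [h₁.1, h₂.1]
    by_cases hj : a ≤ j ∧ j < a + 2 * m
    · obtain ⟨hj1, hj2⟩ := hj
      have htwo : (0 : ℕ) < 2 := by norm_num
      have hpos : ∀ e : ℕ, 0 < 2 ^ e := fun e => Nat.pow_pos htwo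
      have hmid : c₁ j (k - 1) = c₂ j (k - 1) := by
        refine ih _ ?_ j (k - 1) rfl
        rw [← hn]
        exact (Nat.mul_lt_mul_right (hpos _)).mpr (by omega)
      have hleft : c₁ (j - 1) ((k - 1) / 2) = c₂ (j - 1) ((k - 1) / 2) := by
        by_cases hja : a ≤ j - 1
        · have he1 : (a + 2 * m - 1 - (j - 1)).toNat = (a + 2 * m - 1 - j).toNat + 1 := by
            omega
          refine ih _ ?_ (j - 1) ((k - 1) / 2) rfl
          rw [← hn, he1, pow_succ]
          have hre : (k - 1) / 2 * (2 ^ (a + 2 * m - 1 - j).toNat * 2)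
              = ((k - 1) / 2 * 2) * 2 ^ (a + 2 * m - 1 - j).toNat := by ring
          rw [hre]
          refine (Nat.mul_lt_mul_right (hpos _)).mpr ?_
          have := Nat.div_mul_le_self (k - 1) 2
          omega
        · rw [(hout (j - 1) (by omega) _).1, (hout (j - 1) (by omega) _).2]
      have hright : c₁ (j + 1) (2 * k - 1) = c₂ (j + 1) (2 * k - 1) := by
        by_cases hjb : j + 1 < a + 2 * m
        · have he2 : (a + 2 * m - 1 - j).toNat = (a + 2 * m - 1 - (j + 1)).toNat + 1 := by
            omega
          refine ih _ ?_ (j + 1) (2 * k - 1) rfl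
          rw [← hn, he2, pow_succ]
          have hre : k * (2 ^ (a + 2 * m - 1 - (j + 1)).toNat * 2)
              = (2 * k) * 2 ^ (a + 2 * m - 1 - (j + 1)).toNat := by ring
          rw [hre]
          exact (Nat.mul_lt_mul_right (hpos _)).mpr (by omega)
        · rw [(hout (j + 1) (by omega) _).1, (hout (j + 1) (by omega) _).2]
      rw [h₁.2 j k hk, h₂.2 j k hk, hmid, hleft, hright]
    · rw [(hout j hj k).1, (hout j hj k).2]
end
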